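/- Let Γ be a simple graph on m vertices and let G = {G_i}_{i=1}^m and H = {H_i}_{i=1}^m be two collections of groups such that for each 1 ≤ i ≤ m the underlying sets of G_i and H_i have the same cardinality. Then the graph product kernels K_Γ(G) and K_Γ(H) are isomorphic as groups. -/

import Mathlib

open scoped Topology
open ContinuousMap

noncomputable section

/-- The map on generalized loops induced by a continuous map. -/
def GenLoop.push {X Y : Type} [TopologicalSpace X] [TopologicalSpace Y] {N : Type} (f : C(X, Y))
    {x : X} (p : GenLoop N X x) : GenLoop N Y (f x) :=
  ⟨f.comp p.1, fun t ht => by simp [p.2 t ht]⟩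

/-- The map induced by a continuous map on homotopy groups (as pointed sets). -/
def piMap {X Y : Type} [TopologicalSpace X] [TopologicalSpace Y] (f : C(X, Y)) (N : Type) (x : X) :
    HomotopyGroup N X x → HomotopyGroup N Y (f x) :=
  Quotient.map (GenLoop.push f) (fun _ _ h => Nonempty.map (fun H => H.compContinuousMap f) h)

/-- A weakly contractible space: all homotopy groups (including `π₀`) are trivial. -/
def WeaklyContractible (X : Type) [TopologicalSpace X] : Prop :=
  Nonempty X ∧ ∀ (x : X) (n : ℕ), Subsingleton (HomotopyGroup (Fin n) X x)

/-- A weak homotopy equivalence: induces bijections on all homotopy groups at all basepoints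
(including `π₀`). -/
def IsWeakHomotopyEquiv {X Y : Type} [TopologicalSpace X] [TopologicalSpace Y]
    (f : C(X, Y)) : Prop :=
  (Nonempty Y → Nonempty X) ∧ ∀ (x : X) (n : ℕ), Function.Bijective (piMap f (Fin n) x)

/-- `X` is a homotopy retract of `Y`. -/
def HomotopyRetract (X Y : Type) [TopologicalSpace X] [TopologicalSpace Y] : Prop :=
  ∃ (i : C(X, Y)) (r : C(Y, X)), (r.comp i).Homotopic (ContinuousMap.id X)

/-- The underlying map of a homotopy equivalence. -/
def IsHEquivMap {X Y : Type} [TopologicalSpace X] [TopologicalSpace Y] (f : C(X, Y)) : Prop :=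
  ∃ g : C(Y, X), (g.comp f).Homotopic (ContinuousMap.id X) ∧
    (f.comp g).Homotopic (ContinuousMap.id Y)

/-- The homotopy fibre of `f` over `b`. -/
def HFiber {E B : Type} [TopologicalSpace E] [TopologicalSpace B] (f : C(E, B)) (b : B) : Type :=
  { z : E × C(unitInterval, B) // z.2 0 = f z.1 ∧ z.2 1 = b }

instance {E B : Type} [TopologicalSpace E] [TopologicalSpace B] (f : C(E, B)) (b : B) :
    TopologicalSpace (HFiber f b) :=
  instTopologicalSpaceSubtype

/-- The projection from the homotopy fibre to the total space. -/
def HFiber.proj {E B : Type} [TopologicalSpace E] [TopologicalSpace B] (f : C(E, B)) (b : B) :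
    C(HFiber f b, E) :=
  ⟨fun z => z.1.1, by fun_prop⟩

/-- Comparison map from `F` to the homotopy fibre of `p`, given a null-homotopy of `p ∘ i`. -/
def hfibCompare {F E B : Type} [TopologicalSpace F] [TopologicalSpace E] [TopologicalSpace B]
    (i : C(F, E)) (p : C(E, B)) (b : B)
    (H : ContinuousMap.Homotopy (p.comp i) (ContinuousMap.const F b)) : C(F, HFiber p b) where
  toFun z := ⟨(i z, (H.toContinuousMap.comp ContinuousMap.prodSwap).curry z),
    by simp, by simp⟩
  continuous_toFun := by
    apply Continuous.subtype_mk
    exact i.continuous.prodMk ((H.toContinuousMap.comp ContinuousMap.prodSwap).curry).continuous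

/-- A sequence `F → E → B` is a homotopy fibration if `p ∘ i` is null-homotopic via a homotopy
for which the induced comparison map from `F` to the homotopy fibre of `p` is a homotopy
equivalence. -/
def IsHomotopyFibration {F E B : Type} [TopologicalSpace F] [TopologicalSpace E]
    [TopologicalSpace B] (i : C(F, E)) (p : C(E, B)) : Prop :=
  ∃ (b : B) (H : ContinuousMap.Homotopy (p.comp i) (ContinuousMap.const F b)),
    IsHEquivMap (hfibCompare i p b H)


open CategoryTheory


/-- The singular chain complex functor with coefficients in a commutative ring `R`. -/
def singularChains (R : Type) [CommRing R] : TopCat.{0} ⥤ ChainComplex (ModuleCat.{0} R) ℕ :=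
  TopCat.toSSet ⋙ ((SimplicialObject.whiskering _ _).obj (ModuleCat.free R)) ⋙
    AlgebraicTopology.alternatingFaceMapComplex _

/-- Singular homology of a space with coefficients in `R`. -/
def SH (R : Type) [CommRing R] (n : ℕ) (X : Type) [TopologicalSpace X] : ModuleCat R :=
  ((singularChains R).obj (TopCat.of X)).homology n

/-- The induced map on singular homology. -/
def SHmap (R : Type) [CommRing R] (n : ℕ) {X Y : Type} [TopologicalSpace X] [TopologicalSpace Y]
    (f : C(X, Y)) : SH R n X ⟶ SH R n Y :=
  HomologicalComplex.homologyMap ((singularChains R).map (TopCat.ofHom f : TopCat.of X ⟶ TopCat.of Y)) n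

/-- An abelian group is a finitely generated `R`-module (for some compatible `R`-module
structure). -/
def IsFGModuleOver (R : Type) [CommRing R] (M : Type) [AddCommGroup M] : Prop :=
  ∃ (N : Type) (_ : AddCommGroup N) (_ : Module R N),
    Module.Finite R N ∧ Nonempty (M ≃+ N)

/-- A (multiplicative) group is, up to isomorphism, a finitely generated `R`-module. -/
def IsFGMulOver (R : Type) [CommRing R] (G : Type) [Group G] : Prop :=
  ∃ (N : Type) (_ : AddCommGroup N) (_ : Module R N),
    Module.Finite R N ∧ Nonempty (G ≃* Multiplicative N)

/-- A space has finite type over `R`: each reduced integral homology group is a finitely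
generated `R`-module.  (For connected spaces and `R = ℤ` this is the usual notion of
finite type.) -/
def FiniteTypeOver (R : Type) [CommRing R] (X : Type) [TopologicalSpace X] : Prop :=
  ∀ n : ℕ, 1 ≤ n → IsFGModuleOver R (SH ℤ n X)

/-- The ideal `(p) ⊆ ℤ`. -/
def pIdeal (p : ℕ) : Ideal ℤ := Ideal.span {(p : ℤ)}

instance pIdeal.isPrime (p : ℕ) [hp : Fact p.Prime] : (pIdeal p).IsPrime := by
  rw [pIdeal, Ideal.span_singleton_prime (by exact_mod_cast hp.out.ne_zero)]
  exact_mod_cast Nat.prime_iff_prime_int.mp hp.out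

/-- The integers localized at the prime `p`. -/
abbrev Zloc (p : ℕ) [Fact p.Prime] : Type := Localization.AtPrime (pIdeal p)

/-- A nonempty path-connected space all of whose homology with coefficients in `R` vanishes
in positive degrees, i.e. whose reduced `R`-homology vanishes. -/
def AcyclicOver (R : Type) [CommRing R] (X : Type) [TopologicalSpace X] : Prop :=
  Nonempty X ∧ PathConnectedSpace X ∧ ∀ n : ℕ, 1 ≤ n → Subsingleton (SH R n X)

/-- An acyclic space: reduced integral homology vanishes. -/
def AcyclicSpace (X : Type) [TopologicalSpace X] : Prop := AcyclicOver ℤ X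

/-- A homology rational sphere: a connected space with `H̃⋆(X;ℤ) ≅ ℚ`, concentrated in a
single (positive) degree. -/
def IsHomologyRationalSphere (X : Type) [TopologicalSpace X] : Prop :=
  Nonempty X ∧ PathConnectedSpace X ∧ ∃ d : ℕ, 1 ≤ d ∧ Nonempty ((SH ℤ d X) ≃+ ℚ) ∧
    ∀ n : ℕ, 1 ≤ n → n ≠ d → Subsingleton (SH ℤ n X)



/-! ### Local spaces, GEMs and generalised Postnikov towers -/

/-- `S`-local space: the `k`-th power map on all homotopy groups is bijective
for every `k` with `S k`. -/
def SLocalSpace (S : ℕ → Prop) (X : Type) [TopologicalSpace X] : Prop :=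
  ∀ (x : X) (n k : ℕ), S k →
    Function.Bijective (fun g : HomotopyGroup (Fin (n + 1)) X x => g ^ k)

/-- The family of exponents inverted in `p`-local spaces. -/
def pInv (p : ℕ) : ℕ → Prop := fun k => k ≠ 0 ∧ ¬ (p ∣ k)

/-- The family of exponents inverted in rational spaces. -/
def ratInv : ℕ → Prop := fun k => k ≠ 0

/-- No exponents inverted (integral setting). -/
def intInv : ℕ → Prop := fun _ => False

/-- Homotopy groups are finitely generated `R`-modules in every degree. -/
def PiFiniteOver (R : Type) [CommRing R] (X : Type) [TopologicalSpace X] : Prop :=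
  ∀ (x : X) (n : ℕ), IsFGMulOver R (HomotopyGroup (Fin (n + 1)) X x)

/-- An Eilenberg-MacLane space `K(A, n+1)` for some abelian group `A`. -/
def IsEMSpace (Y : Type) [TopologicalSpace Y] (n : ℕ) : Prop :=
  Nonempty Y ∧ PathConnectedSpace Y ∧
    (∀ (y : Y) (k : ℕ), k ≠ n + 1 → Subsingleton (HomotopyGroup (Fin k) Y y)) ∧
    (∀ (y : Y) (a b : HomotopyGroup (Fin (n + 1)) Y y), a * b = b * a)

/-- A generalised Eilenberg-MacLane space (GEM): a space homotopy equivalent to a (possibly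
infinite) product of Eilenberg-MacLane spaces of abelian groups. -/
def IsGEM (Z : Type) [TopologicalSpace Z] : Prop :=
  ∃ (ι : Type) (Y : ι → Type) (_ : ∀ i, TopologicalSpace (Y i)) (n : ι → ℕ),
    (∀ i, IsEMSpace (Y i) (n i)) ∧ Nonempty (ContinuousMap.HomotopyEquiv Z (∀ i, Y i))

/-- One step of a generalised Postnikov tower: `q : Z' → Z` is, up to homotopy, the fibre
inclusion of a homotopy fibration `Z' → Z → K` with `K` a `c`-connected GEM which is `S`-local,
and of finite type over `R` when `ft = true`. -/
def GPTStep (R : Type) [CommRing R] (S : ℕ → Prop) (ft : Bool) (c : ℕ)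
    {Z' Z : Type} [TopologicalSpace Z'] [TopologicalSpace Z] (q : C(Z', Z)) : Prop :=
  ∃ (K : Type) (_ : TopologicalSpace K) (k : C(Z, K)),
    IsGEM K ∧ (∀ (y : K) (j : ℕ), j ≤ c → Subsingleton (HomotopyGroup (Fin j) K y)) ∧
    SLocalSpace S K ∧ (ft = true → PiFiniteOver R K) ∧ IsHomotopyFibration q k

/-- `X` admits a generalised Postnikov tower of length `l` whose principal fibrations have as
fibres `c`-connected GEMs which are `S`-local, and of finite type over `R` when `ft = true`.
(`c = 1` gives the usual simply-connected GEM condition.) -/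
def HasGPT (R : Type) [CommRing R] (S : ℕ → Prop) (ft : Bool) (c : ℕ)
    (X : Type) [TopologicalSpace X] (l : ℕ) : Prop :=
  ∃ (Z : ℕ → Type) (_ : ∀ n, TopologicalSpace (Z n)) (q : ∀ n, C(Z (n + 1), Z n)),
    WeaklyContractible (Z 0) ∧ (∀ n < l, GPTStep R S ft c (q n)) ∧
    ∃ f : C(X, Z l), IsWeakHomotopyEquiv f

/-- A universal cover: a covering map with simply connected total space. -/
def IsUniversalCover {X' X : Type} [TopologicalSpace X'] [TopologicalSpace X]
    (q : C(X', X)) : Prop :=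
  IsCoveringMap (q : X' → X) ∧ SimplyConnectedSpace X'

/-! ### The classes `P`, `F`, `K` and their local analogues -/

/-- The class `P` (in its `(R, S, loc)`-parametrised form): the minimal class, closed under
homotopy retracts, of connected spaces (`S`-local and of finite type over `R` when
`loc = true`) whose universal covers admit finite type (over `R`) `S`-local generalised
Postnikov towers of finite length. -/
def ClassPGen (R : Type) [CommRing R] (S : ℕ → Prop) (loc : Bool)
    (X : Type) [TopologicalSpace X] : Prop :=
  ConnectedSpace X ∧ (loc = true → SLocalSpace S X ∧ FiniteTypeOver R X) ∧
  ∃ (Y : Type) (_ : TopologicalSpace Y), ConnectedSpace Y ∧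
    (loc = true → SLocalSpace S Y ∧ FiniteTypeOver R Y) ∧
    (∃ (Y' : Type) (_ : TopologicalSpace Y') (c : C(Y', Y)), IsUniversalCover c ∧
      ∃ l : ℕ, HasGPT R S true 1 Y' l) ∧
    HomotopyRetract X Y

/-- The class `𝐏` of the paper. -/
def ClassP (X : Type) [TopologicalSpace X] : Prop := ClassPGen ℤ intInv false X

/-- The class `𝐏ₚ` of the paper. -/
def ClassPp (p : ℕ) [Fact p.Prime] (X : Type) [TopologicalSpace X] : Prop :=
  ClassPGen (Zloc p) (pInv p) true X

/-- The class `𝐏₀` of the paper. -/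
def ClassP0 (X : Type) [TopologicalSpace X] : Prop := ClassPGen ℚ ratInv true X

/-- The class `F` (parametrised): connected spaces whose universal covers are of finite type
(over `R`) and have non-trivial homotopy groups in only finitely many dimensions. -/
def ClassFGen (R : Type) [CommRing R] (S : ℕ → Prop) (loc : Bool)
    (X : Type) [TopologicalSpace X] : Prop :=
  ConnectedSpace X ∧ (loc = true → SLocalSpace S X ∧ FiniteTypeOver R X) ∧
  ∃ (X' : Type) (_ : TopologicalSpace X') (c : C(X', X)), IsUniversalCover c ∧
    FiniteTypeOver R X' ∧ (loc = true → SLocalSpace S X') ∧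
    ∃ N : ℕ, ∀ n ≥ N, ∀ x' : X', Subsingleton (HomotopyGroup (Fin (n + 1)) X' x')

/-- The class `𝐅` of the paper. -/
def ClassF (X : Type) [TopologicalSpace X] : Prop := ClassFGen ℤ intInv false X

/-- The class `𝐅ₚ` of the paper. -/
def ClassFp (p : ℕ) [Fact p.Prime] (X : Type) [TopologicalSpace X] : Prop :=
  ClassFGen (Zloc p) (pInv p) true X

/-- The class `𝐅₀` of the paper. -/
def ClassF0 (X : Type) [TopologicalSpace X] : Prop := ClassFGen ℚ ratInv true X

/-- `X` admits a classical Postnikov tower (consisting of stages `P n`, comparison maps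
`f n : X → P n`, structure maps `q n : P (n+1) → P n` and `k`-invariants
`k n : P n → L n` with `L n` an Eilenberg-MacLane space of dimension `n + 2`) in which all but
finitely many of the `k`-invariants are trivial (null-homotopic). -/
def HasFinitelyManyKInvariants (X : Type) [TopologicalSpace X] : Prop :=
  ∃ (P : ℕ → Type) (_ : ∀ n, TopologicalSpace (P n))
    (f : ∀ n, C(X, P n)) (q : ∀ n, C(P (n + 1), P n))
    (L : ℕ → Type) (_ : ∀ n, TopologicalSpace (L n)) (k : ∀ n, C(P n, L n)),
    WeaklyContractible (P 0) ∧
    (∀ n, (f n).Homotopic ((q n).comp (f (n + 1)))) ∧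
    (∀ (n : ℕ) (x : X) (j : ℕ), j ≤ n → Function.Bijective (piMap (f n) (Fin j) x)) ∧
    (∀ (n : ℕ) (y : P n) (j : ℕ), j > n → Subsingleton (HomotopyGroup (Fin j) (P n) y)) ∧
    (∀ n, IsEMSpace (L n) (n + 1)) ∧
    (∀ n, IsHomotopyFibration (q n) (k n)) ∧
    Set.Finite {n : ℕ | ¬ ∃ y : L n, (k n).Homotopic (ContinuousMap.const (P n) y)}

/-- The class `K` (parametrised): connected spaces whose universal covers are of finite type
(over `R`) and have only finitely many non-trivial `k`-invariants. -/
def ClassKGen (R : Type) [CommRing R] (S : ℕ → Prop) (loc : Bool)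
    (X : Type) [TopologicalSpace X] : Prop :=
  ConnectedSpace X ∧ (loc = true → SLocalSpace S X ∧ FiniteTypeOver R X) ∧
  ∃ (X' : Type) (_ : TopologicalSpace X') (c : C(X', X)), IsUniversalCover c ∧
    FiniteTypeOver R X' ∧ (loc = true → SLocalSpace S X') ∧
    HasFinitelyManyKInvariants X'

/-- The class `𝐊` of the paper. -/
def ClassK (X : Type) [TopologicalSpace X] : Prop := ClassKGen ℤ intInv false X

/-- The class `𝐊ₚ` of the paper. -/
def ClassKp (p : ℕ) [Fact p.Prime] (X : Type) [TopologicalSpace X] : Prop :=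
  ClassKGen (Zloc p) (pInv p) true X

/-- The class `𝐊₀` of the paper. -/
def ClassK0 (X : Type) [TopologicalSpace X] : Prop := ClassKGen ℚ ratInv true X

/-- The class `𝐄₀` of the paper: connected spaces whose universal cover is rational elliptic,
i.e. a rational space with finite dimensional rational homotopy and rational homology. -/
def ClassE0 (X : Type) [TopologicalSpace X] : Prop :=
  ConnectedSpace X ∧
  ∃ (X' : Type) (_ : TopologicalSpace X') (c : C(X', X)), IsUniversalCover c ∧
    SLocalSpace ratInv X' ∧
    (∀ (x' : X') (n : ℕ), IsFGMulOver ℚ (HomotopyGroup (Fin (n + 1)) X' x')) ∧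
    (∃ N : ℕ, ∀ n ≥ N, ∀ x' : X', Subsingleton (HomotopyGroup (Fin (n + 1)) X' x')) ∧
    (∀ n : ℕ, 1 ≤ n → IsFGModuleOver ℚ (SH ℚ n X')) ∧
    (∃ N : ℕ, ∀ n ≥ N, Subsingleton (SH ℚ n X'))

/-! ### Asphericity and connectivity -/

/-- An aspherical (`K(π,1)`) space. -/
def IsAspherical (X : Type) [TopologicalSpace X] : Prop :=
  Nonempty X ∧ PathConnectedSpace X ∧
    ∀ (x : X) (n : ℕ), 2 ≤ n → Subsingleton (HomotopyGroup (Fin n) X x)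

/-- `X` is a `K(G, 1)`. -/
def IsKpi1Of (X : Type) [TopologicalSpace X] (G : Type) [Group G] : Prop :=
  IsAspherical X ∧ ∃ x : X, Nonempty (FundamentalGroup X x ≃* G)

/-- An `r`-connected space: homotopy groups vanish in degrees `≤ r`. -/
def IsNConnected (r : ℕ) (X : Type) [TopologicalSpace X] : Prop :=
  Nonempty X ∧ ∀ (x : X) (k : ℕ), k ≤ r → Subsingleton (HomotopyGroup (Fin k) X x)


/-! ### Cones, suspensions, smash products and pushouts -/

/-- The (unreduced) cone on `X`: `X × I` with `X × {1}` collapsed to a point. -/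
def TopCone (X : Type) [TopologicalSpace X] : Type :=
  Quot (fun a b : X × unitInterval => a.2 = 1 ∧ b.2 = 1)

instance (X : Type) [TopologicalSpace X] : TopologicalSpace (TopCone X) :=
  inferInstanceAs (TopologicalSpace (Quot _))

/-- The inclusion of `X` into the base of the cone. -/
def coneIncl (X : Type) [TopologicalSpace X] : C(X, TopCone X) :=
  ⟨fun x => Quot.mk _ (x, 0), continuous_quot_mk.comp (by fun_prop)⟩

/-- The map of cones induced by a continuous map. -/
def coneMap {X Y : Type} [TopologicalSpace X] [TopologicalSpace Y] (f : C(X, Y)) :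
    C(TopCone X, TopCone Y) :=
  ⟨Quot.lift (fun a => Quot.mk _ (f a.1, a.2))
      (fun _ _ h => Quot.sound ⟨h.1, h.2⟩),
    continuous_quot_lift _ (continuous_quot_mk.comp (by fun_prop))⟩

theorem coneMap_mapsTo {X Y : Type} [TopologicalSpace X] [TopologicalSpace Y] (f : C(X, Y)) :
    Set.MapsTo (coneMap f) (Set.range (coneIncl X)) (Set.range (coneIncl Y)) := by
  rintro _ ⟨x, rfl⟩; exact ⟨f x, rfl⟩

/-- The reduced suspension of a pointed space: `X × I` with `X × {0} ∪ X × {1} ∪ {x₀} × I`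
collapsed to a point. -/
def RSusp (X : Type) [TopologicalSpace X] (x0 : X) : Type :=
  Quot (fun a b : X × unitInterval =>
    (a.2 = 0 ∨ a.2 = 1 ∨ a.1 = x0) ∧ (b.2 = 0 ∨ b.2 = 1 ∨ b.1 = x0))

instance (X : Type) [TopologicalSpace X] (x0 : X) : TopologicalSpace (RSusp X x0) :=
  inferInstanceAs (TopologicalSpace (Quot _))

/-- The basepoint of the reduced suspension. -/
def RSusp.pt (X : Type) [TopologicalSpace X] (x0 : X) : RSusp X x0 :=
  Quot.mk _ (x0, 0)

/-- The map of reduced suspensions induced by a pointed continuous map. -/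
def rsuspMap {X Y : Type} [TopologicalSpace X] [TopologicalSpace Y] {x0 : X} {y0 : Y}
    (f : C(X, Y)) (hf : f x0 = y0) : C(RSusp X x0, RSusp Y y0) :=
  ⟨Quot.lift (fun a => Quot.mk _ (f a.1, a.2))
      (by
        rintro a b ⟨ha, hb⟩
        refine Quot.sound ⟨?_, ?_⟩ <;>
          [rcases ha with h | h | h; rcases hb with h | h | h] <;>
          simp [h, hf]),
    continuous_quot_lift _ (continuous_quot_mk.comp (by fun_prop))⟩

/-- The half-smash `B ⋊ X = (B × X)/(B × {x₀})`. -/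
def HalfSmash (B X : Type) [TopologicalSpace B] [TopologicalSpace X] (x0 : X) : Type :=
  Quot (fun u v : B × X => u.2 = x0 ∧ v.2 = x0)

instance (B X : Type) [TopologicalSpace B] [TopologicalSpace X] (x0 : X) :
    TopologicalSpace (HalfSmash B X x0) :=
  inferInstanceAs (TopologicalSpace (Quot _))

/-- The smash product `A ∧ X = (A × X)/(A × {x₀} ∪ {a₀} × X)`. -/
def Smash (A X : Type) [TopologicalSpace A] [TopologicalSpace X] (a0 : A) (x0 : X) : Type :=
  Quot (fun u v : A × X => (u.1 = a0 ∨ u.2 = x0) ∧ (v.1 = a0 ∨ v.2 = x0))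

instance (A X : Type) [TopologicalSpace A] [TopologicalSpace X] (a0 : A) (x0 : X) :
    TopologicalSpace (Smash A X a0 x0) :=
  inferInstanceAs (TopologicalSpace (Quot _))

/-- The basepoint of a smash product. -/
def Smash.pt {A X : Type} [TopologicalSpace A] [TopologicalSpace X] (a0 : A) (x0 : X) :
    Smash A X a0 x0 :=
  Quot.mk _ (a0, x0)

/-- The wedge `U ∨ V`. -/
def Wedge (U V : Type) [TopologicalSpace U] [TopologicalSpace V] (u0 : U) (v0 : V) : Type :=
  Quot (fun s t : U ⊕ V => (s = Sum.inl u0 ∨ s = Sum.inr v0) ∧ (t = Sum.inl u0 ∨ t = Sum.inr v0))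

instance (U V : Type) [TopologicalSpace U] [TopologicalSpace V] (u0 : U) (v0 : V) :
    TopologicalSpace (Wedge U V u0 v0) :=
  inferInstanceAs (TopologicalSpace (Quot _))

/-- The relation defining the pushout of `B ←f− A −g→ X`. -/
def PushoutRel {A B X : Type} (f : A → B) (g : A → X) (u v : B ⊕ X) : Prop :=
  ∃ a : A, u = Sum.inl (f a) ∧ v = Sum.inr (g a)

/-- The (strict) topological pushout of `B ←f− A −g→ X`. -/
def TopPushout {A B X : Type} [TopologicalSpace A] [TopologicalSpace B] [TopologicalSpace X]
    (f : C(A, B)) (g : C(A, X)) : Type :=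
  Quot (PushoutRel f g)

instance {A B X : Type} [TopologicalSpace A] [TopologicalSpace B] [TopologicalSpace X]
    (f : C(A, B)) (g : C(A, X)) : TopologicalSpace (TopPushout f g) :=
  inferInstanceAs (TopologicalSpace (Quot _))

/-! ### Simplicial complexes and polyhedral products -/

/-- An (abstract) simplicial complex on the vertex set `[m] = {0, …, m-1}`. -/
structure SimplicialComplexOn (m : ℕ) where
  faces : Set (Finset (Fin m))
  empty_mem : ∅ ∈ faces
  down_closed : ∀ {σ τ : Finset (Fin m)}, σ ∈ faces → τ ⊆ σ → τ ∈ faces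
  vertex_mem : ∀ i : Fin m, {i} ∈ faces

namespace SimplicialComplexOn

/-- `K` is the full simplex on its vertex set. -/
def IsSimplex {m : ℕ} (K : SimplicialComplexOn m) : Prop := K.faces = Set.univ

/-- A minimal non-face of `K`. -/
def IsMinNonFace {m : ℕ} (K : SimplicialComplexOn m) (M : Finset (Fin m)) : Prop :=
  2 ≤ M.card ∧ M ∉ K.faces ∧ ∀ τ : Finset (Fin m), τ ⊂ M → τ ∈ K.faces

/-- A flag complex: all minimal non-faces have cardinality two. -/
def IsFlag {m : ℕ} (K : SimplicialComplexOn m) : Prop :=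
  ∀ M : Finset (Fin m), K.IsMinNonFace M → M.card = 2

/-- The minimal non-faces are mutually disjoint. -/
def MinNonFacesDisjoint {m : ℕ} (K : SimplicialComplexOn m) : Prop :=
  ∀ M M' : Finset (Fin m), K.IsMinNonFace M → K.IsMinNonFace M' → M ≠ M' →
    Disjoint M M'

end SimplicialComplexOn

/-- The polyhedral product `Z_K(X, A)` of the family of pairs `(X i, A i)`, as a subset of
`∏ i, X i`. -/
def polyProd {m : ℕ} (K : SimplicialComplexOn m) (X : Fin m → Type)
    [∀ i, TopologicalSpace (X i)] (A : ∀ i, Set (X i)) : Set (∀ i, X i) :=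
  {z | ∃ σ ∈ K.faces, ∀ i, i ∉ σ → z i ∈ A i}

/-- The continuous inclusion of a subspace. -/
def inclCM {X : Type} [TopologicalSpace X] (A : Set X) : C(A, X) :=
  ⟨Subtype.val, continuous_subtype_val⟩

/-- The map of polyhedral products induced by a family of maps of pairs. -/
def polyProdMap {m : ℕ} (K : SimplicialComplexOn m) {X Y : Fin m → Type}
    [∀ i, TopologicalSpace (X i)] [∀ i, TopologicalSpace (Y i)]
    {A : ∀ i, Set (X i)} {B : ∀ i, Set (Y i)} (f : ∀ i, C(X i, Y i))
    (hf : ∀ i, Set.MapsTo (f i) (A i) (B i)) :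
    C(polyProd K X A, polyProd K Y B) :=
  have hmem : ∀ z : polyProd K X A, (fun i => f i (z.1 i)) ∈ polyProd K Y B := fun z => by
    obtain ⟨σ, hσ, hz⟩ := z.2
    exact ⟨σ, hσ, fun i hi => hf i (hz i hi)⟩
  ⟨fun z => ⟨fun i => f i (z.1 i), hmem z⟩,
    Continuous.subtype_mk (continuous_pi fun i =>
      (f i).continuous.comp ((continuous_apply i).comp continuous_subtype_val)) hmem⟩

/-- The inclusion of the polyhedral product into the ambient product. -/
def polyProdProj {m : ℕ} (K : SimplicialComplexOn m) (X : Fin m → Type)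
    [∀ i, TopologicalSpace (X i)] (A : ∀ i, Set (X i)) :
    C(polyProd K X A, ∀ i, X i) :=
  ⟨Subtype.val, continuous_subtype_val⟩

/-! ### Cofibrations -/

/-- A map is a cofibration when it has the homotopy extension property. -/
def IsCofibration {A X : Type} [TopologicalSpace A] [TopologicalSpace X] (j : C(A, X)) : Prop :=
  ∀ (Y : Type) (_ : TopologicalSpace Y) (g : C(X, Y)) (h : C(unitInterval × A, Y)),
    (∀ a, h (0, a) = g (j a)) →
    ∃ H : C(unitInterval × X, Y), (∀ x, H (0, x) = g x) ∧ ∀ t a, H (t, j a) = h (t, a)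

/-- `(X, A)` is an NDR-pair: the inclusion `A → X` is a cofibration. -/
def IsNDRPair {X : Type} [TopologicalSpace X] (A : Set X) : Prop :=
  IsCofibration (inclCM A)


/-! ### The evaluation map from the cone on a homotopy fibre -/

/-- The canonical evaluation map `C(hofib(A → X)) → X`, sending `((a, γ), t)` to `γ t`. -/
def coneFibEval {X : Type} [TopologicalSpace X] (A : Set X) (x0 : X) :
    C(TopCone (HFiber (inclCM A) x0), X) :=
  ⟨Quot.lift (fun w : HFiber (inclCM A) x0 × unitInterval => w.1.1.2 w.2)
      (fun w w' h => by
        rw [h.1, h.2, w.1.2.2, w'.1.2.2]),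
    continuous_quot_lift _ (by
      have h1 : Continuous fun w : HFiber (inclCM A) x0 × unitInterval =>
          ((w.1.1.2, w.2) : C(unitInterval, X) × unitInterval) :=
        ((continuous_snd.comp (continuous_subtype_val.comp continuous_fst)).prodMk
          continuous_snd)
      exact ContinuousEval.continuous_eval.comp h1)⟩

theorem coneFibEval_mapsTo {X : Type} [TopologicalSpace X] (A : Set X) (x0 : X) :
    Set.MapsTo (coneFibEval A x0) (Set.range (coneIncl (HFiber (inclCM A) x0))) A := by
  rintro _ ⟨w, rfl⟩
  show w.1.2 0 ∈ A
  rw [w.2.1]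
  exact w.1.1.2

/-! ### Lusternik-Schnirelmann category and localizations -/

/-- `cat X ≤ n`: `X` is covered by `n + 1` open sets, each of which is contractible in `X`. -/
def LSCatLE (X : Type) [TopologicalSpace X] (n : ℕ) : Prop :=
  ∃ U : Fin (n + 1) → Set X, (∀ i, IsOpen (U i)) ∧ (⋃ i, U i) = Set.univ ∧
    ∀ i, ∃ x0 : X, (inclCM (U i)).Homotopic (ContinuousMap.const _ x0)

/-- `f : X → Y` is an `S`-localization (with coefficients `R`): `Y` is `S`-local and `f`
induces an isomorphism on homology with coefficients in `R`. -/
def IsLocalizationOver (R : Type) [CommRing R] (S : ℕ → Prop) {X Y : Type}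
    [TopologicalSpace X] [TopologicalSpace Y] (f : C(X, Y)) : Prop :=
  SLocalSpace S Y ∧ ∀ n : ℕ, Function.Bijective (SHmap R n f)

/-! ### The induced homomorphism on fundamental groups, and the plus construction -/

/-- The homomorphism induced by a continuous map on fundamental groups. -/
def pi1Hom {X Y : Type} [TopologicalSpace X] [TopologicalSpace Y] (f : C(X, Y)) (x : X) :
    FundamentalGroup X x →* FundamentalGroup Y (f x) :=
  CategoryTheory.Functor.mapEnd
    (X := FundamentalGroupoid.mk x)
    (FundamentalGroupoid.fundamentalGroupoidFunctor.map
      (show TopCat.of X ⟶ TopCat.of Y from TopCat.ofHom f))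

/-- `l : X → Y` is a Quillen plus construction with respect to the perfect normal subgroup
`P ≤ π₁(X, x)`: it kills exactly `P` on fundamental groups and its homotopy fibre is acyclic
(equivalently, it is a homology isomorphism for all local coefficient systems on `Y`). -/
def IsPlusConstructionWrt {X Y : Type} [TopologicalSpace X] [TopologicalSpace Y]
    (l : C(X, Y)) (x : X) (P : Subgroup (FundamentalGroup X x)) : Prop :=
  P.Normal ∧ ⁅P, P⁆ = P ∧
  Function.Surjective (pi1Hom l x) ∧ (pi1Hom l x).ker = P ∧
  AcyclicSpace (HFiber l (l x))

/-! ### Graph products of groups -/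

/-- The commutation relations defining a graph product. -/
def graphProdRels {m : ℕ} (Γ : SimpleGraph (Fin m)) (G : Fin m → Type)
    [∀ i, Group (G i)] : Set (Monoid.CoprodI G) :=
  {x | ∃ (i j : Fin m) (g : G i) (h : G j), Γ.Adj i j ∧
    x = Monoid.CoprodI.of g * Monoid.CoprodI.of h *
      (Monoid.CoprodI.of g)⁻¹ * (Monoid.CoprodI.of h)⁻¹}

/-- The graph product of the groups `G i` over the simple graph `Γ`. -/
def GraphProduct {m : ℕ} (Γ : SimpleGraph (Fin m)) (G : Fin m → Type)
    [∀ i, Group (G i)] : Type :=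
  Monoid.CoprodI G ⧸ Subgroup.normalClosure (graphProdRels Γ G)

instance {m : ℕ} (Γ : SimpleGraph (Fin m)) (G : Fin m → Type) [∀ i, Group (G i)] :
    Group (GraphProduct Γ G) :=
  inferInstanceAs (Group (Monoid.CoprodI G ⧸ Subgroup.normalClosure (graphProdRels Γ G)))

theorem graphProdRels_le_ker {m : ℕ} (Γ : SimpleGraph (Fin m)) (G : Fin m → Type)
    [∀ i, Group (G i)] :
    Subgroup.normalClosure (graphProdRels Γ G) ≤
      (Monoid.CoprodI.lift fun i => MonoidHom.mulSingle G i).ker := by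
  apply Subgroup.normalClosure_le_normal
  rintro x ⟨i, j, g, h, hadj, rfl⟩
  have hc : Commute (MonoidHom.mulSingle G i g) (MonoidHom.mulSingle G j h) :=
    Pi.mulSingle_commute hadj.ne g h
  simp only [SetLike.mem_coe, MonoidHom.mem_ker, map_mul, map_inv, Monoid.CoprodI.lift_of]
  rw [hc.eq]
  group

/-- The canonical homomorphism from the graph product to the direct product. -/
def GraphProduct.toPi {m : ℕ} (Γ : SimpleGraph (Fin m)) (G : Fin m → Type)
    [∀ i, Group (G i)] : GraphProduct Γ G →* ∀ i, G i :=
  QuotientGroup.lift _ (Monoid.CoprodI.lift fun i => MonoidHom.mulSingle G i)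
    (graphProdRels_le_ker Γ G)

/-- The graph product kernel `K_Γ(G)`: the kernel of the canonical homomorphism
`G^Γ → ∏ i, G i`. -/
def GraphProductKernel {m : ℕ} (Γ : SimpleGraph (Fin m)) (G : Fin m → Type)
    [∀ i, Group (G i)] : Subgroup (GraphProduct Γ G) :=
  (GraphProduct.toPi Γ G).ker

/-- The flag complex of a simple graph. -/
def flagComplex {m : ℕ} (Γ : SimpleGraph (Fin m)) : SimplicialComplexOn m where
  faces := {σ | ∀ i ∈ σ, ∀ j ∈ σ, i ≠ j → Γ.Adj i j}
  empty_mem := by simp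
  down_closed := fun hσ hτ i hi j hj hij => hσ i (hτ hi) j (hτ hj) hij
  vertex_mem := by
    intro i j hj k hk hjk
    simp only [Finset.mem_singleton] at hj hk
    exact absurd (hj.trans hk.symm) hjk


/-- A rational sphere `S^n_{(0)}` (`n ≥ 2`): a simply connected rational space whose reduced
integral homology is a single `ℚ` in degree `n`. -/
def IsRationalSphere (Y : Type) [TopologicalSpace Y] (n : ℕ) : Prop :=
  SimplyConnectedSpace Y ∧ SLocalSpace ratInv Y ∧ 2 ≤ n ∧
    Nonempty ((SH ℤ n Y) ≃+ ℚ) ∧ ∀ k : ℕ, 1 ≤ k → k ≠ n → Subsingleton (SH ℤ k Y)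

end


/-! The kernel of `toPi` is the fundamental group of a 2-complex that only sees the pointed sets
`(G i, 1)`: its vertices are the points of `∏ i, G i`, its edges change one coordinate, and its
2-cells are the triangles within one coordinate and the squares of two adjacent coordinates
(`KernelModel`). An edge `p → update p i a` is sent to the loop `edgeWord` through the ordered
normal forms `orderedProd`. Conversely a word of the graph product, read from a vertex, traces a
path in the complex; this is a cocycle `GraphProduct Γ G →* KernelModel Γ G 1 ≀ᵣ ∏ i, G i`
that vanishes on normal forms, and pushing it back to the graph product gives the
Kaloujnine–Krasner embedding attached to the section `orderedProd`, so the two maps are mutually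
inverse on the kernel. -/

lemma Pi.mul_mulSingle_eq_update {ι : Type*} [DecidableEq ι] {G : ι → Type*} [∀ i, Group (G i)]
    (p : ∀ i, G i) (i : ι) (g : G i) : p * Pi.mulSingle i g = Function.update p i (p i * g) := by
  ext j
  rcases eq_or_ne j i with rfl | hj
  · simp
  · simp [hj]

lemma Pi.inv_mulSingle_inv_mul {ι : Type*} [DecidableEq ι] {G : ι → Type*} [∀ i, Group (G i)]
    (x : ∀ i, G i) (i : ι) (g : G i) :
    ((Pi.mulSingle i g)⁻¹ * x)⁻¹ = Function.update x⁻¹ i (x⁻¹ i * g) := by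
  rw [mul_inv_rev, inv_inv, Pi.mul_mulSingle_eq_update]

namespace RegularWreathProduct

variable {Q : Type*} [Group Q]

def mapLeft {D₁ D₂ : Type*} [Group D₁] [Group D₂] (f : D₁ →* D₂) : D₁ ≀ᵣ Q →* D₂ ≀ᵣ Q where
  toFun a := ⟨f ∘ a.left, a.right⟩
  map_one' := by ext <;> simp
  map_mul' a b := by ext <;> simp [Function.comp_def]

@[simp]
lemma mapLeft_left {D₁ D₂ : Type*} [Group D₁] [Group D₂] (f : D₁ →* D₂) (a : D₁ ≀ᵣ Q) :
    (mapLeft f a).left = f ∘ a.left := rfl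

@[simp]
lemma mapLeft_right {D₁ D₂ : Type*} [Group D₁] [Group D₂] (f : D₁ →* D₂) (a : D₁ ≀ᵣ Q) :
    (mapLeft f a).right = a.right := rfl

def kaloujnineKrasner {E : Type*} [Group E] (π : E →* Q) (t : Q → E) : E →* E ≀ᵣ Q where
  toFun w := ⟨fun x => t x * w * (t ((π w)⁻¹ * x))⁻¹, π w⟩
  map_one' := by ext <;> simp
  map_mul' w v := by ext x <;> simp [mul_assoc]

@[simp]
lemma kaloujnineKrasner_left {E : Type*} [Group E] (π : E →* Q) (t : Q → E) (w : E) (x : Q) :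
    (kaloujnineKrasner π t w).left x = t x * w * (t ((π w)⁻¹ * x))⁻¹ := rfl

@[simp]
lemma kaloujnineKrasner_right {E : Type*} [Group E] (π : E →* Q) (t : Q → E) (w : E) :
    (kaloujnineKrasner π t w).right = π w := rfl

end RegularWreathProduct

namespace GraphProduct

open Function

variable {m : ℕ} (Γ : SimpleGraph (Fin m)) {G : Fin m → Type} [∀ i, Group (G i)]

def of (i : Fin m) : G i →* GraphProduct Γ G :=
  (QuotientGroup.mk' (Subgroup.normalClosure (graphProdRels Γ G))).comp Monoid.CoprodI.of

lemma of_commute {i j : Fin m} (hij : Γ.Adj i j) (g : G i) (h : G j) :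
    Commute (of Γ i g) (of Γ j h) := by
  rw [← commutatorElement_eq_one_iff_commute, commutatorElement_def]
  exact (QuotientGroup.eq_one_iff _).mpr
    (Subgroup.subset_normalClosure ⟨i, j, g, h, hij, rfl⟩)

lemma hom_ext {M : Type*} [Monoid M] {φ ψ : GraphProduct Γ G →* M}
    (h : ∀ i, φ.comp (of Γ i) = ψ.comp (of Γ i)) : φ = ψ :=
  QuotientGroup.monoidHom_ext _ (Monoid.CoprodI.ext_hom _ _ h)

def lift {M : Type*} [Group M] (f : ∀ i, G i →* M)
    (hf : ∀ {i j}, Γ.Adj i j → ∀ g h, Commute (f i g) (f j h)) : GraphProduct Γ G →* M :=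
  QuotientGroup.lift _ (Monoid.CoprodI.lift f) <| Subgroup.normalClosure_le_normal <| by
    rintro _ ⟨i, j, g, h, hij, rfl⟩
    simp only [SetLike.mem_coe, MonoidHom.mem_ker, map_mul, map_inv, Monoid.CoprodI.lift_of,
      (hf hij g h).eq, mul_inv_cancel_right, mul_inv_cancel]

@[simp]
lemma lift_of {M : Type*} [Group M] (f : ∀ i, G i →* M)
    (hf : ∀ {i j}, Γ.Adj i j → ∀ g h, Commute (f i g) (f j h)) (i : Fin m) (g : G i) :
    lift Γ f hf (of Γ i g) = f i g :=
  Monoid.CoprodI.lift_of f g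

@[simp]
lemma toPi_of (i : Fin m) (g : G i) : toPi Γ G (of Γ i g) = Pi.mulSingle i g :=
  Monoid.CoprodI.lift_of (fun i => MonoidHom.mulSingle G i) g

def listProd (l : List (Fin m)) (p : ∀ i, G i) : GraphProduct Γ G :=
  (l.map fun j => of Γ j (p j)).prod

def orderedProd (p : ∀ i, G i) : GraphProduct Γ G :=
  listProd Γ (List.finRange m) p

@[simp]
lemma toPi_orderedProd (p : ∀ i, G i) : toPi Γ G (orderedProd Γ p) = p := by
  rw [orderedProd, listProd, map_list_prod, List.map_map]
  simp only [Function.comp_def, toPi_of]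
  rw [← Finset.noncommProd_toFinset _ _ (fun i _ j _ _ => Pi.mulSingle_apply_commute p i j)
    (List.nodup_finRange m), List.toFinset_finRange, Finset.noncommProd_mulSingle]

@[simp]
lemma orderedProd_one : orderedProd Γ (1 : ∀ i, G i) = 1 :=
  List.prod_eq_one (by simp)

lemma listProd_update_of_notMem {l : List (Fin m)} {i : Fin m} (hi : i ∉ l) (p : ∀ i, G i)
    (g : G i) : listProd Γ l (update p i g) = listProd Γ l p := by
  refine congrArg List.prod (List.map_congr_left fun j hj => ?_)
  rw [update_of_ne (ne_of_mem_of_not_mem hj hi)]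

lemma commute_listProd {l : List (Fin m)} {i : Fin m} {p : ∀ i, G i}
    (hp : ∀ j ∈ l, p j = 1 ∨ Γ.Adj i j) (g : G i) : Commute (of Γ i g) (listProd Γ l p) := by
  refine Commute.list_prod_right _ _ fun x hx => ?_
  obtain ⟨j, hj, rfl⟩ := List.mem_map.mp hx
  rcases hp j hj with h | h
  · rw [h, map_one]
    exact Commute.one_right _
  · exact of_commute Γ h g (p j)

lemma orderedProd_mul_of {p : ∀ i, G i} {i : Fin m} (hp : ∀ j, i < j → p j = 1 ∨ Γ.Adj i j)
    (g : G i) : orderedProd Γ p * of Γ i g = orderedProd Γ (update p i (p i * g)) := by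
  obtain ⟨s, t, hst⟩ := List.append_of_mem (List.mem_finRange i)
  have hsorted := List.pairwise_lt_finRange m
  rw [hst, List.pairwise_append, List.pairwise_cons] at hsorted
  obtain ⟨-, ⟨ht, -⟩, hs_lt⟩ := hsorted
  have hs : ∀ j ∈ s, j < i := fun j hj => hs_lt j hj i List.mem_cons_self
  have expand : ∀ q : ∀ i, G i,
      orderedProd Γ q = listProd Γ s q * (of Γ i (q i) * listProd Γ t q) := by
    intro q
    simp only [orderedProd, listProd, hst, List.map_append, List.prod_append, List.map_cons,
      List.prod_cons]
  have hi_s : i ∉ s := fun h => lt_irrefl i (hs i h)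
  have hi_t : i ∉ t := fun h => lt_irrefl i (ht i h)
  rw [expand, expand, listProd_update_of_notMem Γ hi_s, listProd_update_of_notMem Γ hi_t,
    update_self, map_mul]
  simp only [mul_assoc]
  rw [(commute_listProd Γ (fun j hj => hp j (ht j hj)) g).eq]

def edgeWord (p : ∀ i, G i) (i : Fin m) (a : G i) : GraphProduct Γ G :=
  orderedProd Γ p * of Γ i ((p i)⁻¹ * a) * (orderedProd Γ (update p i a))⁻¹

lemma edgeWord_mul_edgeWord (p : ∀ i, G i) (i : Fin m) (a b : G i) :
    edgeWord Γ p i a * edgeWord Γ (update p i a) i b = edgeWord Γ p i b := by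
  have h : of Γ i ((p i)⁻¹ * a) * of Γ i (a⁻¹ * b) = of Γ i ((p i)⁻¹ * b) := by
    rw [← map_mul, mul_assoc, mul_inv_cancel_left]
  simp only [edgeWord, update_idem, update_self, mul_assoc, inv_mul_cancel_left]
  rw [← mul_assoc (of Γ i _), h]

lemma edgeWord_mul_edgeWord_comm {i j : Fin m} (hij : Γ.Adj i j) (p : ∀ i, G i) (a : G i)
    (b : G j) : edgeWord Γ p i a * edgeWord Γ (update p i a) j b =
      edgeWord Γ p j b * edgeWord Γ (update p j b) i a := by
  simp only [edgeWord, update_of_ne hij.ne, update_of_ne hij.ne.symm, update_comm hij.ne,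
    mul_assoc, inv_mul_cancel_left]
  rw [← mul_assoc (of Γ i _), (of_commute Γ hij _ _).eq, mul_assoc]

lemma edgeWord_eq_one {p : ∀ i, G i} {i : Fin m} (hp : ∀ j, i < j → p j = 1 ∨ Γ.Adj i j)
    (a : G i) : edgeWord Γ p i a = 1 := by
  rw [edgeWord, orderedProd_mul_of Γ hp, mul_inv_cancel_left, mul_inv_cancel]

@[simp]
lemma toPi_edgeWord (p : ∀ i, G i) (i : Fin m) (a : G i) : toPi Γ G (edgeWord Γ p i a) = 1 := by
  rw [edgeWord, map_mul, map_mul, map_inv, toPi_orderedProd, toPi_orderedProd, toPi_of,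
    Pi.mul_mulSingle_eq_update, mul_inv_cancel_left, mul_inv_cancel]

end GraphProduct

abbrev KernelModel.Edge {m : ℕ} (S : Fin m → Type) : Type := (∀ i, S i) × Σ i, S i

open Function in
/-- Relations of the fundamental group of the 2-complex on the vertex set `∏ i, S i` whose edges
`(p, i, a)` go from `p` to `update p i a`, with a triangle for every three points differing in the
same coordinate and a square for every two moves in adjacent coordinates; the third family kills
a set of edges containing a spanning tree (reset the coordinates from the last to the first). -/
def KernelModel.rels {m : ℕ} (Γ : SimpleGraph (Fin m)) (S : Fin m → Type) (e : ∀ i, S i) :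
    Set (FreeGroup (Edge S)) :=
  {r | (∃ (p : ∀ k, S k) (i : Fin m) (a b : S i),
      r = .of (p, ⟨i, a⟩) * .of (update p i a, ⟨i, b⟩) * (.of (p, ⟨i, b⟩))⁻¹) ∨
    (∃ (p : ∀ k, S k) (i j : Fin m) (a : S i) (b : S j), Γ.Adj i j ∧
      r = .of (p, ⟨i, a⟩) * .of (update p i a, ⟨j, b⟩) *
        (.of (p, ⟨j, b⟩) * .of (update p j b, ⟨i, a⟩))⁻¹) ∨
    (∃ (p : ∀ k, S k) (i : Fin m) (a : S i),
      (∀ j, i < j → p j = e j ∨ Γ.Adj i j) ∧ r = .of (p, ⟨i, a⟩))}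

abbrev KernelModel {m : ℕ} (Γ : SimpleGraph (Fin m)) (S : Fin m → Type) (e : ∀ i, S i) : Type :=
  PresentedGroup (KernelModel.rels Γ S e)

namespace KernelModel

open Function

variable {m : ℕ} {Γ : SimpleGraph (Fin m)} {S T : Fin m → Type} {e : ∀ i, S i} {f : ∀ i, T i}

variable (Γ e) in
def edge (p : ∀ i, S i) (i : Fin m) (a : S i) : KernelModel Γ S e :=
  PresentedGroup.of (p, ⟨i, a⟩)

lemma edge_mul_edge (p : ∀ i, S i) (i : Fin m) (a b : S i) :
    edge Γ e p i a * edge Γ e (update p i a) i b = edge Γ e p i b := by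
  have h := PresentedGroup.mk_eq_mk_of_mul_inv_mem
    (show _ * _⁻¹ ∈ rels Γ S e from Or.inl ⟨p, i, a, b, rfl⟩)
  rw [map_mul] at h
  exact h

lemma edge_mul_edge_comm {i j : Fin m} (hij : Γ.Adj i j) (p : ∀ i, S i) (a : S i) (b : S j) :
    edge Γ e p i a * edge Γ e (update p i a) j b =
      edge Γ e p j b * edge Γ e (update p j b) i a := by
  have h := PresentedGroup.mk_eq_mk_of_mul_inv_mem
    (show _ * _⁻¹ ∈ rels Γ S e from Or.inr (Or.inl ⟨p, i, j, a, b, hij, rfl⟩))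
  rw [map_mul, map_mul] at h
  exact h

@[simp]
lemma edge_self (p : ∀ i, S i) (i : Fin m) : edge Γ e p i (p i) = 1 := by
  simpa [update_eq_self] using edge_mul_edge (Γ := Γ) (e := e) p i (p i) (p i)

lemma edge_eq_one {p : ∀ i, S i} {i : Fin m} (hp : ∀ j, i < j → p j = e j ∨ Γ.Adj i j)
    (a : S i) : edge Γ e p i a = 1 :=
  PresentedGroup.one_of_mem (Or.inr (Or.inr ⟨p, i, a, hp, rfl⟩))

lemma edge_ext {G : Type*} [Group G] {φ ψ : KernelModel Γ S e →* G}
    (h : ∀ p i a, φ (edge Γ e p i a) = ψ (edge Γ e p i a)) : φ = ψ :=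
  PresentedGroup.ext fun ⟨p, i, a⟩ => h p i a

variable (Γ e) in
def lift {M : Type*} [Group M] (φ : (∀ i, S i) → (i : Fin m) → S i → M)
    (h_trans : ∀ p i a b, φ p i a * φ (update p i a) i b = φ p i b)
    (h_comm : ∀ {i j}, Γ.Adj i j → ∀ p a b,
      φ p i a * φ (update p i a) j b = φ p j b * φ (update p j b) i a)
    (h_tree : ∀ {p i}, (∀ j, i < j → p j = e j ∨ Γ.Adj i j) → ∀ a, φ p i a = 1) :
    KernelModel Γ S e →* M :=
  PresentedGroup.toGroup (f := fun x => φ x.1 x.2.1 x.2.2) <| by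
    rintro r (⟨p, i, a, b, rfl⟩ | ⟨p, i, j, a, b, hij, rfl⟩ | ⟨p, i, a, hp, rfl⟩) <;>
      simp only [map_mul, map_inv, FreeGroup.lift_apply_of]
    · rw [h_trans, mul_inv_cancel]
    · rw [h_comm hij, mul_inv_cancel]
    · exact h_tree hp a

@[simp]
lemma lift_edge {M : Type*} [Group M] (φ : (∀ i, S i) → (i : Fin m) → S i → M) (h_trans h_comm
    h_tree) (p : ∀ i, S i) (i : Fin m) (a : S i) :
    lift Γ e φ h_trans h_comm h_tree (edge Γ e p i a) = φ p i a :=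
  PresentedGroup.toGroup.of _

def map (F : ∀ i, S i → T i) (hF : ∀ i, F i (e i) = f i) :
    KernelModel Γ S e →* KernelModel Γ T f :=
  have hupd (p : ∀ i, S i) (i : Fin m) (a : S i) :
      (fun j => F j (update p i a j)) = update (fun j => F j (p j)) i (F i a) :=
    funext (apply_update F p i a)
  lift Γ e (fun p i a => edge Γ f (fun j => F j (p j)) i (F i a))
    (fun p i a b => by simp only [hupd, edge_mul_edge])
    (fun hij p a b => by simp only [hupd, edge_mul_edge_comm hij])
    (fun hp a => edge_eq_one (fun j hj => (hp j hj).imp_left fun h => by rw [h, hF]) (F _ a))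

@[simp]
lemma map_edge (F : ∀ i, S i → T i) (hF : ∀ i, F i (e i) = f i) (p : ∀ i, S i) (i : Fin m)
    (a : S i) : map (Γ := Γ) F hF (edge Γ e p i a) = edge Γ f (fun j => F j (p j)) i (F i a) := by
  simp only [map, lift_edge]

def congr (E : ∀ i, S i ≃ T i) (hE : ∀ i, E i (e i) = f i) :
    KernelModel Γ S e ≃* KernelModel Γ T f :=
  MonoidHom.toMulEquiv (map (fun i => E i) hE)
    (map (fun i => (E i).symm) fun i => (E i).symm_apply_eq.mpr (hE i).symm)
    (edge_ext fun p i a => by simp) (edge_ext fun p i a => by simp)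

end KernelModel

namespace GraphProduct

open Function KernelModel RegularWreathProduct

variable {m : ℕ} (Γ : SimpleGraph (Fin m)) (G : Fin m → Type) [∀ i, Group (G i)]

/-- The coordinate `x` stands for the vertex `x⁻¹`, to match the left translations in the
multiplication of `≀ᵣ`. -/
def cocycleOf (i : Fin m) : G i →* KernelModel Γ G 1 ≀ᵣ (∀ i, G i) where
  toFun g := ⟨fun x => edge Γ 1 x⁻¹ i (x⁻¹ i * g), Pi.mulSingle i g⟩
  map_one' := by
    ext1
    · funext x
      simp only [mul_one, edge_self, one_left, Pi.one_apply]
    · exact Pi.mulSingle_one i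
  map_mul' g h := by
    ext1
    · funext x
      simp only [mul_left, Pi.mul_apply, Pi.inv_mulSingle_inv_mul, update_self, ← mul_assoc]
      rw [edge_mul_edge]
    · exact Pi.mulSingle_mul i g h

@[simp]
lemma cocycleOf_left (i : Fin m) (g : G i) (x : ∀ i, G i) :
    (cocycleOf Γ G i g).left x = edge Γ 1 x⁻¹ i (x⁻¹ i * g) := rfl

@[simp]
lemma cocycleOf_right (i : Fin m) (g : G i) : (cocycleOf Γ G i g).right = Pi.mulSingle i g := rfl

lemma cocycleOf_commute {i j : Fin m} (hij : Γ.Adj i j) (g : G i) (h : G j) :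
    Commute (cocycleOf Γ G i g) (cocycleOf Γ G j h) := by
  ext1
  · funext x
    have hi : update x⁻¹ j (x⁻¹ j * h) i = x⁻¹ i := update_of_ne hij.ne _ _
    have hj : update x⁻¹ i (x⁻¹ i * g) j = x⁻¹ j := update_of_ne hij.ne.symm _ _
    simp only [mul_left, Pi.mul_apply, cocycleOf_left, cocycleOf_right, Pi.inv_mulSingle_inv_mul]
    rw [hi, hj, edge_mul_edge_comm hij]
  · exact Pi.mulSingle_commute hij.ne g h

def cocycle : GraphProduct Γ G →* KernelModel Γ G 1 ≀ᵣ (∀ i, G i) :=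
  lift Γ (cocycleOf Γ G) (cocycleOf_commute Γ G)

@[simp]
lemma cocycle_of (i : Fin m) (g : G i) : cocycle Γ G (of Γ i g) = cocycleOf Γ G i g :=
  lift_of ..

@[simp]
lemma cocycle_right (w : GraphProduct Γ G) : (cocycle Γ G w).right = toPi Γ G w := by
  have : rightHom.comp (cocycle Γ G) = toPi Γ G := hom_ext Γ fun i => by
    ext g : 1
    simp [rightHom]
  exact DFunLike.congr_fun this w

lemma cocycle_mul_left (u v : GraphProduct Γ G) (x : ∀ i, G i) :
    (cocycle Γ G (u * v)).left x =
      (cocycle Γ G u).left x * (cocycle Γ G v).left ((toPi Γ G u)⁻¹ * x) := by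
  rw [map_mul, mul_left, Pi.mul_apply, cocycle_right]

lemma cocycle_listProd_left {l : List (Fin m)} (hl : l.Pairwise (· < ·)) (p : ∀ i, G i)
    {x : ∀ i, G i} (hx : ∀ t ∈ l, ∀ u, t < u → x u = 1) :
    (cocycle Γ G (listProd Γ l p)).left x = 1 := by
  induction l generalizing x with
  | nil => rfl
  | cons j l ih =>
    obtain ⟨hj, hl⟩ := List.pairwise_cons.mp hl
    have h_edge : edge Γ 1 x⁻¹ j (x⁻¹ j * p j) = 1 := edge_eq_one (fun u hu => Or.inl <| by
      rw [Pi.inv_apply, hx j List.mem_cons_self u hu, inv_one, Pi.one_apply]) _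
    have h_rest : (cocycle Γ G (listProd Γ l p)).left ((Pi.mulSingle j (p j))⁻¹ * x) = 1 := by
      refine ih hl fun t ht u htu => ?_
      have hju : u ≠ j := ((hj t ht).trans htu).ne'
      rw [Pi.mul_apply, Pi.inv_apply, Pi.mulSingle_eq_of_ne hju, inv_one, one_mul]
      exact hx t (List.mem_cons_of_mem j ht) u htu
    rw [listProd, List.map_cons, List.prod_cons, cocycle_mul_left, cocycle_of, cocycleOf_left,
      toPi_of, h_edge, one_mul]
    exact h_rest

lemma cocycle_orderedProd_left_one (p : ∀ i, G i) : (cocycle Γ G (orderedProd Γ p)).left 1 = 1 :=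
  cocycle_listProd_left Γ G (List.pairwise_lt_finRange m) p fun _ _ _ _ => rfl

lemma cocycle_edgeWord_left_one (p : ∀ i, G i) (i : Fin m) (a : G i) :
    (cocycle Γ G (edgeWord Γ p i a)).left 1 = edge Γ 1 p i a := by
  have h_word : edgeWord Γ p i a * orderedProd Γ (update p i a) =
      orderedProd Γ p * of Γ i ((p i)⁻¹ * a) :=
    inv_mul_cancel_right _ _
  have h := congrArg (fun w => (cocycle Γ G w).left 1) h_word
  rw [cocycle_mul_left, cocycle_mul_left, toPi_edgeWord, toPi_orderedProd, inv_one, mul_one,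
    cocycle_orderedProd_left_one, cocycle_orderedProd_left_one, mul_one, one_mul, cocycle_of,
    cocycleOf_left] at h
  simpa only [mul_one, inv_inv, mul_inv_cancel_left] using h

end GraphProduct

namespace GraphProductKernel

open Function GraphProduct KernelModel RegularWreathProduct

variable {m : ℕ} (Γ : SimpleGraph (Fin m)) (G : Fin m → Type) [∀ i, Group (G i)]

def modelToGraphProduct : KernelModel Γ G 1 →* GraphProduct Γ G :=
  KernelModel.lift Γ 1 (edgeWord Γ) (edgeWord_mul_edgeWord Γ)
    (edgeWord_mul_edgeWord_comm Γ) (edgeWord_eq_one Γ)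

def ofModel : KernelModel Γ G 1 →* GraphProductKernel Γ G :=
  (modelToGraphProduct Γ G).codRestrict _ fun x => by
    have : (toPi Γ G).comp (modelToGraphProduct Γ G) = 1 :=
      edge_ext fun p i a => by simp [modelToGraphProduct]
    exact DFunLike.congr_fun this x

@[simp]
lemma coe_ofModel (x : KernelModel Γ G 1) :
    (ofModel Γ G x : GraphProduct Γ G) = modelToGraphProduct Γ G x := rfl

def toModel : GraphProductKernel Γ G →* KernelModel Γ G 1 where
  toFun w := (cocycle Γ G w).left 1
  map_one' := by rw [OneMemClass.coe_one, map_one, one_left, Pi.one_apply]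
  map_mul' w v := by
    rw [Subgroup.coe_mul, map_mul, mul_left, Pi.mul_apply, cocycle_right,
      (MonoidHom.mem_ker.mp w.2 : toPi Γ G w = 1), inv_one, one_mul]

@[simp]
lemma toModel_apply (w : GraphProductKernel Γ G) : toModel Γ G w = (cocycle Γ G w).left 1 := rfl

lemma mapLeft_comp_cocycle :
    (mapLeft (modelToGraphProduct Γ G)).comp (cocycle Γ G) =
      kaloujnineKrasner (toPi Γ G) fun x => orderedProd Γ x⁻¹ := by
  refine hom_ext Γ fun i => ?_
  ext g : 1
  ext1
  · funext x
    simp [modelToGraphProduct, edgeWord, Pi.mul_mulSingle_eq_update]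
  · simp

lemma toModel_ofModel (x : KernelModel Γ G 1) : toModel Γ G (ofModel Γ G x) = x := by
  have : (toModel Γ G).comp (ofModel Γ G) = MonoidHom.id _ :=
    edge_ext fun p i a => by simp [modelToGraphProduct, cocycle_edgeWord_left_one]
  exact DFunLike.congr_fun this x

lemma ofModel_toModel (w : GraphProductKernel Γ G) : ofModel Γ G (toModel Γ G w) = w := by
  have hw : toPi Γ G w = 1 := w.2
  have h := congrArg (fun φ => (φ w).left 1) (mapLeft_comp_cocycle Γ G)
  simp only [MonoidHom.comp_apply, mapLeft_left, Function.comp_apply, kaloujnineKrasner_left, hw,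
    inv_one, mul_one, orderedProd_one, one_mul] at h
  exact Subtype.ext h

def equivModel : GraphProductKernel Γ G ≃* KernelModel Γ G 1 where
  __ := toModel Γ G
  invFun := ofModel Γ G
  left_inv := ofModel_toModel Γ G
  right_inv := toModel_ofModel Γ G

end GraphProductKernel

/-- Theorem 1.8 of the paper: graph product kernels depend only on the cardinalities of the
underlying groups. -/
theorem graphProductKernel_iso_of_equiv {m : ℕ} (Γ : SimpleGraph (Fin m))
    (G H : Fin m → Type) [∀ i, Group (G i)] [∀ i, Group (H i)]
    (hcard : ∀ i, Nonempty (G i ≃ H i)) :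
    Nonempty ((GraphProductKernel Γ G) ≃* (GraphProductKernel Γ H)) := by
  classical
  let E (i : Fin m) : G i ≃ H i := (hcard i).some.trans (Equiv.swap ((hcard i).some 1) 1)
  have hE (i : Fin m) : E i 1 = 1 := Equiv.swap_apply_left _ _
  exact ⟨(GraphProductKernel.equivModel Γ G).trans <|
    (KernelModel.congr E hE).trans (GraphProductKernel.equivModel Γ H).symm⟩
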